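/- Let 𝒱 and 𝒲 be reduced cyclic words. Then: (a) the set 𝕃ℙ₂(𝒱,𝒲) has at most l(𝒱)·l(𝒲) elements; (b) the set 𝕃ℙ₁(𝒲) has at most l(𝒲)·(l(𝒲)−1) elements. -/

import Mathlib

open List

namespace CyclicWords

/-- A letter of the alphabet `𝔸ₙ = {a₁,…,aₙ, ā₁,…,āₙ}`: a generator index together
with a Boolean recording whether the letter is barred. -/
abbrev Letter (n : ℕ) := Bool × Fin n

/-- The involution `x ↦ x̄` on letters. -/
def Letter.bar {n : ℕ} (x : Letter n) : Letter n := (!x.1, x.2)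

/-- A linear word: a finite sequence of letters. -/
abbrev Word (n : ℕ) := List (Letter n)

/-- `W̄ = x̄ₘ ⋯ x̄₁ x̄₀` for `W = x₀x₁⋯xₘ`. -/
def Word.bar {n : ℕ} (W : Word n) : Word n := (W.map Letter.bar).reverse

/-- `Wᵏ`, the concatenation of `k` copies of `W`. -/
def wpow {n : ℕ} (W : Word n) (k : ℕ) : Word n := (List.replicate k W).flatten

/-- A linear word is freely reduced when consecutive letters are never inverse
to each other. -/
def FreelyReduced {n : ℕ} (W : Word n) : Prop :=
  W.Chain' (fun a b => b ≠ Letter.bar a)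

/-- A cyclic word: an equivalence class of linear words under cyclic rotation. -/
abbrev CWord (n : ℕ) := Cycle (Letter n)

/-- `c(W)`, the cyclic word represented by the linear word `W`. -/
def cyc {n : ℕ} (W : Word n) : CWord n := ↑W

/-- The length of a cyclic word. -/
def clen {n : ℕ} (𝒲 : CWord n) : ℕ := 𝒲.length

/-- A cyclic word is reduced if it is non-empty and all of its linear
representatives are freely reduced. -/
def CReduced {n : ℕ} (𝒲 : CWord n) : Prop :=
  𝒲 ≠ Cycle.nil ∧ ∀ W : Word n, cyc W = 𝒲 → FreelyReduced W

/-- `P` is a (linear) subword of the cyclic word `𝒲`, i.e. a linear subword of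
one of its linear representatives. -/
def Subword {n : ℕ} (P : Word n) (𝒲 : CWord n) : Prop :=
  ∃ W : Word n, cyc W = 𝒲 ∧ P <:+: W

/-- `P` is a subword of the power `𝒲ʲ`. -/
def SubwordPow {n : ℕ} (P : Word n) (𝒲 : CWord n) (j : ℕ) : Prop :=
  ∃ W : Word n, cyc W = 𝒲 ∧ P <:+: wpow W j

/-- A surface symbol: a reduced cyclic word in which every letter of `𝔸ₙ`
appears exactly once. -/
def SurfaceSymbol {n : ℕ} (𝒪 : CWord n) : Prop :=
  CReduced 𝒪 ∧ ∃ O : Word n, cyc O = 𝒪 ∧ O.Nodup ∧ ∀ x : Letter n, x ∈ O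

/-- `𝒲` is reduced and its (distinct) letters embed into `𝒪` preserving the
cyclic order. -/
def OrientPos {n : ℕ} (𝒪 𝒲 : CWord n) : Prop :=
  CReduced 𝒲 ∧ ∃ W O : Word n, cyc W = 𝒲 ∧ cyc O = 𝒪 ∧ W.Sublist O

/-- `𝒲` is reduced and its (distinct) letters embed into `𝒪` reversing the
cyclic order. -/
def OrientNeg {n : ℕ} (𝒪 𝒲 : CWord n) : Prop :=
  CReduced 𝒲 ∧ ∃ W O : Word n, cyc W = 𝒲 ∧ cyc O = 𝒪 ∧ W.Sublist O.reverse

open Classical in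
/-- The number `o(𝒲) ∈ {-1,0,1}` associated to a cyclic word `𝒲`. -/
noncomputable def o {n : ℕ} (𝒪 𝒲 : CWord n) : ℤ :=
  if OrientPos 𝒪 𝒲 then 1 else if OrientNeg 𝒪 𝒲 then -1 else 0

/-- Condition (1) of the definition of `𝒪`-linked pairs. -/
def LinkedType1 {n : ℕ} (𝒪 : CWord n) (P Q : Word n) : Prop :=
  ∃ p₁ p₂ q₁ q₂ : Letter n, P = [p₁, p₂] ∧ Q = [q₁, q₂] ∧
    o 𝒪 (cyc [Letter.bar p₁, Letter.bar q₁, p₂, q₂]) ≠ 0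

/-- Condition (2) of the definition of `𝒪`-linked pairs (`x₁`, `x₂` denote the
first and last letters of `Y`). -/
def LinkedType2 {n : ℕ} (𝒪 : CWord n) (P Q : Word n) : Prop :=
  ∃ (p₁ p₂ q₁ q₂ : Letter n) (Y : Word n), Y ≠ [] ∧
    P = p₁ :: Y ++ [p₂] ∧ Q = q₁ :: Y ++ [q₂] ∧ p₁ ≠ q₁ ∧ p₂ ≠ q₂ ∧
    ∀ x₁ x₂ : Letter n, Y.head? = some x₁ → Y.getLast? = some x₂ →
      o 𝒪 (cyc [Letter.bar p₁, Letter.bar q₁, x₁]) = o 𝒪 (cyc [p₂, q₂, Letter.bar x₂])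

/-- Condition (3) of the definition of `𝒪`-linked pairs. -/
def LinkedType3 {n : ℕ} (𝒪 : CWord n) (P Q : Word n) : Prop :=
  ∃ (p₁ p₂ q₁ q₂ : Letter n) (Y : Word n), Y ≠ [] ∧
    P = p₁ :: Y ++ [p₂] ∧ Q = q₁ :: Word.bar Y ++ [q₂] ∧
    p₁ ≠ Letter.bar q₂ ∧ p₂ ≠ Letter.bar q₁ ∧
    ∀ x₁ x₂ : Letter n, Y.head? = some x₁ → Y.getLast? = some x₂ →
      o 𝒪 (cyc [q₂, Letter.bar p₁, x₁]) = o 𝒪 (cyc [Letter.bar q₁, p₂, Letter.bar x₂])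

/-- The ordered pair `(P,Q)` is `𝒪`-linked. -/
def IsLinked {n : ℕ} (𝒪 : CWord n) (P Q : Word n) : Prop :=
  FreelyReduced P ∧ FreelyReduced Q ∧ 2 ≤ P.length ∧ 2 ≤ Q.length ∧
    (LinkedType1 𝒪 P Q ∨ LinkedType2 𝒪 P Q ∨ LinkedType3 𝒪 P Q)

open Classical in
/-- The sign of a linked pair `(P,Q)`. -/
noncomputable def sign {n : ℕ} (𝒪 : CWord n) (P Q : Word n) : ℤ :=
  match P, Q with
  | p₁ :: ps, q₁ :: qs =>
    match ps.getLast?, qs.getLast?, ps.head? with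
    | some p₂, some q₂, some x₁ =>
      if LinkedType1 𝒪 (p₁ :: ps) (q₁ :: qs) then
        o 𝒪 (cyc [Letter.bar p₁, Letter.bar q₁, p₂, q₂])
      else if LinkedType2 𝒪 (p₁ :: ps) (q₁ :: qs) then
        o 𝒪 (cyc [Letter.bar p₁, Letter.bar q₁, x₁])
      else if LinkedType3 𝒪 (p₁ :: ps) (q₁ :: qs) then
        o 𝒪 (cyc [q₂, Letter.bar p₁, x₁])
      else 0
    | _, _, _ => 0
  | _, _ => 0

/-- `𝕃ℙ₁(𝒲)`: `(P,Q)` is an `𝒪`-linked pair of subwords of `𝒲`. -/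
def LP1 {n : ℕ} (𝒪 𝒲 : CWord n) (P Q : Word n) : Prop :=
  IsLinked 𝒪 P Q ∧ Subword P 𝒲 ∧ Subword Q 𝒲

/-- `𝕃ℙ₂(𝒱,𝒲)`: `(P,Q)` is an `𝒪`-linked pair with `P` a subword of `𝒱ʲ`,
`Q` a subword of `𝒲ᵏ` in the appropriate length windows. -/
def LP2 {n : ℕ} (𝒪 𝒱 𝒲 : CWord n) (P Q : Word n) : Prop :=
  IsLinked 𝒪 P Q ∧
    ∃ j k : ℕ, 0 < j ∧ 0 < k ∧ SubwordPow P 𝒱 j ∧ SubwordPow Q 𝒲 k ∧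
      (j - 1) * clen 𝒱 < P.length ∧ P.length ≤ j * clen 𝒱 ∧
      (k - 1) * clen 𝒲 < Q.length ∧ Q.length ≤ k * clen 𝒲

/-- The cut data for `δ` when `(P,Q)` has type (1) or (2): two cuts of `𝒲`
producing `W₁` (starting at the occurrence of `p₂`, the last letter of `P`) and
`W₂` (starting at the occurrence of `q₂`, the last letter of `Q`). -/
def DeltaPair12 {n : ℕ} (𝒪 𝒲 : CWord n) (P Q W₁ W₂ : Word n) : Prop :=
  (LinkedType1 𝒪 P Q ∨ LinkedType2 𝒪 P Q) ∧
  𝒲 = cyc (W₁ ++ W₂) ∧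
  (∃ (P' : Word n) (p₂ : Letter n), P = P' ++ [p₂] ∧ W₁.head? = some p₂ ∧
      P' <:+ W₁ ++ W₂) ∧
  (∃ (Q' : Word n) (q₂ : Letter n), Q = Q' ++ [q₂] ∧ W₂.head? = some q₂ ∧
      Q' <:+ W₂ ++ W₁)

/-- The cut data for `δ` when `(P,Q)` has type (3): `W₁` runs from `p₂` to
`q₁`, and `W₂` from `q₂` to `p₁`. -/
def DeltaPair3 {n : ℕ} (𝒪 𝒲 : CWord n) (P Q W₁ W₂ : Word n) : Prop :=
  LinkedType3 𝒪 P Q ∧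
  ∃ (p₁ p₂ q₁ q₂ : Letter n) (Y Y' : Word n), Y ≠ [] ∧ Y' ≠ [] ∧
    P = p₁ :: Y ++ [p₂] ∧ Q = q₁ :: Y' ++ [q₂] ∧
    W₁.head? = some p₂ ∧ W₁.getLast? = some q₁ ∧
    W₂.head? = some q₂ ∧ W₂.getLast? = some p₁ ∧
    𝒲 = cyc (W₁ ++ Y' ++ W₂ ++ Y)

/-- The words `W₁`, `W₂` obtained by cutting `𝒲` along the linked pair `(P,Q)`. -/
def DeltaPair {n : ℕ} (𝒪 𝒲 : CWord n) (P Q W₁ W₂ : Word n) : Prop :=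
  DeltaPair12 𝒪 𝒲 P Q W₁ W₂ ∨ DeltaPair3 𝒪 𝒲 P Q W₁ W₂

open Classical in
/-- A choice of the pair of linear words obtained by cutting `𝒲` along `(P,Q)`. -/
noncomputable def deltaW {n : ℕ} (𝒪 𝒲 : CWord n) (P Q : Word n) : Word n × Word n :=
  if h : ∃ W : Word n × Word n, DeltaPair 𝒪 𝒲 P Q W.1 W.2 then h.choose else ([], [])

/-- The cyclic word `δ₁(P,Q)`. -/
noncomputable def delta1 {n : ℕ} (𝒪 𝒲 : CWord n) (P Q : Word n) : CWord n :=
  cyc (deltaW 𝒪 𝒲 P Q).1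

/-- The cyclic word `δ₂(P,Q)`. -/
noncomputable def delta2 {n : ℕ} (𝒪 𝒲 : CWord n) (P Q : Word n) : CWord n :=
  cyc (deltaW 𝒪 𝒲 P Q).2

/-- `W₁` is the linear representative of `↑W₁` obtained by cutting immediately
before (the occurrence of) the last letter of `P`: `P` occurs (in a power)
ending exactly at the cut. -/
def CutEnds {n : ℕ} (W₁ P : Word n) : Prop :=
  ∃ (P' : Word n) (p₂ : Letter n) (j : ℕ),
    P = P' ++ [p₂] ∧ W₁.head? = some p₂ ∧ P' <:+ wpow W₁ j

/-- The data for `γ(P,Q)` when `(P,Q) ∈ 𝕃ℙ₂(𝒱,𝒲)` has type (1) or (2):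
`γ(P,Q) = c(V₁W₁)` where `V₁`, `W₁` are the representatives of `𝒱`, `𝒲` obtained
by cutting immediately before `p₂`, resp. `q₂`. -/
def GammaPair12 {n : ℕ} (𝒪 𝒱 𝒲 : CWord n) (P Q : Word n) (G : CWord n) : Prop :=
  (LinkedType1 𝒪 P Q ∨ LinkedType2 𝒪 P Q) ∧
  ∃ V₁ W₁ : Word n, cyc V₁ = 𝒱 ∧ cyc W₁ = 𝒲 ∧ CutEnds V₁ P ∧ CutEnds W₁ Q ∧
    G = cyc (V₁ ++ W₁)

/-- The data for `γ(P,Q)` when `(P,Q) ∈ 𝕃ℙ₂(𝒱,𝒲)` has type (3):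
`V₁` is the subword of `𝒱` starting right after the end of `Y` and ending right
before the first letter of `Y` (whose footprint in `𝒱` is the arc `U`), and
similarly `W₁` for `Ȳ` in `𝒲`; then `γ(P,Q) = c(V₁W₁)`. -/
def GammaPair3 {n : ℕ} (𝒪 𝒱 𝒲 : CWord n) (P Q : Word n) (G : CWord n) : Prop :=
  LinkedType3 𝒪 P Q ∧
  ∃ (p₁ p₂ q₁ q₂ : Letter n) (Y V₁ W₁ U U' : Word n) (j k : ℕ),
    P = p₁ :: Y ++ [p₂] ∧ Q = q₁ :: Word.bar Y ++ [q₂] ∧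
    V₁.head? = some p₂ ∧ V₁.getLast? = some p₁ ∧
    W₁.head? = some q₂ ∧ W₁.getLast? = some q₁ ∧
    𝒱 = cyc (U ++ V₁) ∧ Y <+: wpow (U ++ V₁) j ∧ Y.length % clen 𝒱 = U.length ∧
    𝒲 = cyc (U' ++ W₁) ∧ Word.bar Y <+: wpow (U' ++ W₁) k ∧
      (Word.bar Y).length % clen 𝒲 = U'.length ∧
    G = cyc (V₁ ++ W₁)

/-- `G` is the cyclic word `γ(P,Q)` associated to `(P,Q) ∈ 𝕃ℙ₂(𝒱,𝒲)`. -/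
def GammaPair {n : ℕ} (𝒪 𝒱 𝒲 : CWord n) (P Q : Word n) (G : CWord n) : Prop :=
  GammaPair12 𝒪 𝒱 𝒲 P Q G ∨ GammaPair3 𝒪 𝒱 𝒲 P Q G

open Classical in
/-- A choice of the cyclic word `γ(P,Q)` for `(P,Q) ∈ 𝕃ℙ₂(𝒱,𝒲)`. -/
noncomputable def gamma {n : ℕ} (𝒪 𝒱 𝒲 : CWord n) (P Q : Word n) : CWord n :=
  if h : ∃ G : CWord n, GammaPair 𝒪 𝒱 𝒲 P Q G then h.choose else Cycle.nil

/-- The set of non-empty reduced cyclic words, the basis of `𝕍`. -/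
def RedCyc (n : ℕ) := {𝒲 : CWord n // CReduced 𝒲}

instance {n : ℕ} [NeZero n] : Inhabited (RedCyc n) :=
  ⟨⟨cyc [default], by
    constructor
    · intro h
      have h' : ([(default : Letter n)] : Word n) = [] := (Cycle.coe_eq_nil _).mp h
      simp at h'
    · intro W hW
      have h1 : W ~r [(default : Letter n)] := Cycle.coe_eq_coe.mp hW
      have h2 : W = [(default : Letter n)] := List.perm_singleton.mp h1.perm
      rw [h2]
      exact List.isChain_singleton _⟩⟩

open Classical in
/-- View a cyclic word as a basis element of `𝕍` (junk value if not reduced). -/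
noncomputable def toRed {n : ℕ} [NeZero n] (c : CWord n) : RedCyc n :=
  if h : CReduced c then ⟨c, h⟩ else default

/-!
A linked pair `(P, Q)` is recorded by a pair of linear representatives `(R, R')` of `𝒱` and `𝒲`,
of which there are at most `l(𝒱) · l(𝒲)`. For types (1) and (2) the cuts are made just before the
last letters `p₂`, `q₂`, and `P = p₁Yp₂`, `Q = q₁Yq₂` can be read off: since `p₁ ≠ q₁`, `Y` is the
longest common suffix of the periodic words `⋯RR` and `⋯R'R'`. Type (3) is type (2) for `(P, Q̄)`
in `(𝒱, 𝒲̄)`. The cases are told apart by whether `R'` starts with the inverse of the last letter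
of `R`: this is forced in type (3), and excluded by `o ≠ 0` in type (1) and by the reducedness of
`𝒲` in type (2). For `𝒱 = 𝒲` the two cuts differ, which leaves `l(𝒲) · (l(𝒲) - 1)` choices.
-/

section PeriodicWords

variable {α : Type*}

lemma flatten_replicate_append_comm (T D : List α) (j : ℕ) :
    (replicate j (T ++ D)).flatten ++ T = T ++ (replicate j (D ++ T)).flatten := by
  induction j with
  | zero => simp
  | succ j ih => simp only [replicate_succ, flatten_cons, append_assoc, ih]

lemma exists_isRotated_of_flatten_replicate_eq_append {V A Z : List α} {j : ℕ}
    (h : (replicate j V).flatten = A ++ Z) :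
    ∃ R, R ~r V ∧ (∃ k, A <:+ (replicate k R).flatten) ∧ ∃ k, Z <+: (replicate k R).flatten := by
  have hlen : A.length + Z.length = j * V.length := by
    simpa using (congrArg length h).symm
  set m := A.length % V.length
  set q := A.length / V.length
  set T := V.take m
  set D := V.drop m
  have hT : T.length = m := by
    rcases eq_or_ne V [] with rfl | hV
    · simp only [length_nil, Nat.mul_zero, Nat.add_eq_zero_iff] at hlen
      simp [T, m, hlen.1]
    · simpa [T] using (Nat.mod_lt _ (length_pos_iff.2 hV)).le
  have hqj : q ≤ j := by
    rcases Nat.eq_zero_or_pos V.length with h0 | h0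
    · simp [q, h0]
    · exact Nat.div_le_of_le_mul (by rw [Nat.mul_comm]; omega)
  have hsplit : A ++ (Z ++ T) = (T ++ (replicate q (D ++ T)).flatten) ++
      (replicate (j - q) (D ++ T)).flatten := by
    rw [← append_assoc, ← h, ← take_append_drop m V, flatten_replicate_append_comm,
      append_assoc, ← flatten_append, ← replicate_add, Nat.add_sub_cancel' hqj]
  have hR : (D ++ T).length = V.length := by
    rw [length_append, Nat.add_comm, ← length_append, take_append_drop]
  obtain ⟨hA, hZ⟩ := append_inj hsplit (by
    simp [hT, hR, m, q, Nat.mul_comm _ V.length, Nat.mod_add_div])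
  refine ⟨D ++ T, ?_, ⟨q + 1, D, ?_⟩, j - q, T, hZ⟩
  · rw [← take_append_drop m V]; exact isRotated_append
  · rw [hA, replicate_succ, flatten_cons, append_assoc]

lemma head?_eq_of_cons_prefix_flatten_replicate {R U : List α} {x : α} {k : ℕ}
    (h : x :: U <+: (replicate k R).flatten) : R.head? = some x := by
  rcases Nat.eq_zero_or_pos k with rfl | hk
  · simp at h
  · obtain ⟨t, ht⟩ := h
    rw [← head?_flatten_replicate hk.ne', ← ht, cons_append, head?_cons]

/-- `X` is a suffix of the left-infinite periodic word `⋯RRR`. -/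
def SuffixOfPow (X R : List α) : Prop := ∃ k, X <:+ (replicate k R).flatten

namespace SuffixOfPow

variable {X Y R : List α}

lemma of_suffix (h : SuffixOfPow X R) (hYX : Y <:+ X) : SuffixOfPow Y R :=
  let ⟨k, hk⟩ := h; ⟨k, hYX.trans hk⟩

lemma suffix_of_length_le (hX : SuffixOfPow X R) (hY : SuffixOfPow Y R)
    (hl : X.length ≤ Y.length) : X <:+ Y := by
  obtain ⟨j, hj⟩ := hX
  obtain ⟨k, hk⟩ := hY
  have hpow : ∀ {i l : ℕ}, (replicate i R).flatten <:+ (replicate (l + i) R).flatten :=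
    fun {i l} => by rw [replicate_add, flatten_append]; exact suffix_append _ _
  exact suffix_of_suffix_length_le (hj.trans hpow) (hk.trans (Nat.add_comm j k ▸ hpow)) hl

lemma eq_of_length_eq (hX : SuffixOfPow X R) (hY : SuffixOfPow Y R)
    (hl : X.length = Y.length) : X = Y :=
  (hX.suffix_of_length_le hY hl.le).eq_of_length hl

lemma getLast?_eq (h : SuffixOfPow X R) (hX : X ≠ []) : R.getLast? = X.getLast? := by
  obtain ⟨k, t, ht⟩ := h
  rcases Nat.eq_zero_or_pos k with rfl | hk
  · simp_all
  · rw [← getLast?_flatten_replicate hk.ne', ← ht]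
    simp [getLast?_eq_some_getLast hX]

end SuffixOfPow

lemma length_le_of_suffixOfPow {R R' Y Z : List α} {p q : α} (hpq : p ≠ q)
    (hp : SuffixOfPow (p :: Y) R) (hq : SuffixOfPow (q :: Y) R')
    (hZ : SuffixOfPow Z R) (hZ' : SuffixOfPow Z R') : Z.length ≤ Y.length := by
  by_contra! hlt
  have hpZ := hp.suffix_of_length_le hZ hlt
  have hqZ := hq.suffix_of_length_le hZ' hlt
  exact hpq (head_eq_of_cons_eq ((suffix_of_suffix_length_le hpZ hqZ le_rfl).eq_of_length rfl))

lemma exists_isRotated_head?_suffixOfPow {V X : List α} {x : α} {j : ℕ}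
    (h : X ++ [x] <:+: (replicate j V).flatten) :
    ∃ R, R ~r V ∧ R.head? = some x ∧ SuffixOfPow X R := by
  obtain ⟨S, U, hSU⟩ := h
  obtain ⟨R, hR, ⟨k, hA⟩, ⟨k', hZ⟩⟩ :=
    exists_isRotated_of_flatten_replicate_eq_append (V := V) (j := j) (A := S ++ X)
      (Z := x :: U) (by rw [← hSU]; simp)
  exact ⟨R, hR, head?_eq_of_cons_prefix_flatten_replicate hZ, k, (suffix_append S X).trans hA⟩

/-- `R` and `R'` are representatives of two cyclic words cut just before the last letters of `P`
and `Q`. -/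
def Anchored (R R' P Q : List α) : Prop :=
  ∃ p₁ p₂ q₁ q₂ Y, p₁ ≠ q₁ ∧ P = p₁ :: Y ++ [p₂] ∧ Q = q₁ :: Y ++ [q₂] ∧
    R.head? = some p₂ ∧ R'.head? = some q₂ ∧ SuffixOfPow (p₁ :: Y) R ∧ SuffixOfPow (q₁ :: Y) R'

namespace Anchored

variable {R R' P Q P' Q' : List α}

lemma unique (h : Anchored R R' P Q) (h' : Anchored R R' P' Q') : P = P' ∧ Q = Q' := by
  obtain ⟨p₁, p₂, q₁, q₂, Y, hpq, rfl, rfl, hp₂, hq₂, hp, hq⟩ := h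
  obtain ⟨p₁', p₂', q₁', q₂', Y', hpq', rfl, rfl, hp₂', hq₂', hp', hq'⟩ := h'
  have hY : Y.length = Y'.length := le_antisymm
    (length_le_of_suffixOfPow hpq' hp' hq' (hp.of_suffix (suffix_cons _ _))
      (hq.of_suffix (suffix_cons _ _)))
    (length_le_of_suffixOfPow hpq hp hq (hp'.of_suffix (suffix_cons _ _))
      (hq'.of_suffix (suffix_cons _ _)))
  have hP := hp.eq_of_length_eq hp' (by simp [hY])
  have hQ := hq.eq_of_length_eq hq' (by simp [hY])
  rw [hp₂] at hp₂'
  rw [hq₂] at hq₂'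
  simp_all

lemma head?_right (h : Anchored R R' P Q) : R'.head? = Q.getLast? := by
  obtain ⟨-, -, -, q₂, -, -, -, rfl, -, hq₂, -⟩ := h
  rw [hq₂, getLast?_concat]

lemma not_self : ¬ Anchored R R P Q := by
  rintro ⟨p₁, p₂, q₁, q₂, Y, hpq, -, -, -, -, hp, hq⟩
  simpa using length_le_of_suffixOfPow hpq hp hq hp hp

end Anchored

lemma exists_anchored {V W Y : List α} {p₁ p₂ q₁ q₂ : α} {j k : ℕ} (hpq : p₁ ≠ q₁)
    (hP : p₁ :: Y ++ [p₂] <:+: (replicate j V).flatten)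
    (hQ : q₁ :: Y ++ [q₂] <:+: (replicate k W).flatten) :
    ∃ R R', R ~r V ∧ R' ~r W ∧ Anchored R R' (p₁ :: Y ++ [p₂]) (q₁ :: Y ++ [q₂]) ∧
      R.getLast? = (p₁ :: Y).getLast? ∧ R'.getLast? = (q₁ :: Y).getLast? := by
  obtain ⟨R, hR, hp₂, hp⟩ := exists_isRotated_head?_suffixOfPow hP
  obtain ⟨R', hR', hq₂, hq⟩ := exists_isRotated_head?_suffixOfPow hQ
  exact ⟨R, R', hR, hR', ⟨p₁, p₂, q₁, q₂, Y, hpq, rfl, rfl, hp₂, hq₂, hp, hq⟩,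
    hp.getLast?_eq (cons_ne_nil _ _), hq.getLast?_eq (cons_ne_nil _ _)⟩

end PeriodicWords

lemma _root_.Cycle.exists_finset_card_le_length {α : Type*} [DecidableEq α] {s : Cycle α}
    (hs : s ≠ Cycle.nil) :
    ∃ T : Finset (List α), T.card ≤ s.length ∧ ∀ l : List α, (l : Cycle α) = s → l ∈ T := by
  induction s using Quotient.inductionOn' with
  | h V =>
    have hV : V ≠ [] := fun h => hs ((Cycle.coe_eq_nil V).2 h)
    refine ⟨V.cyclicPermutations.toFinset, ?_, fun l hl => ?_⟩
    · exact (toFinset_card_le _).trans (length_cyclicPermutations_of_ne_nil V hV).le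
    · exact mem_toFinset.2 (mem_cyclicPermutations_iff.2 (Cycle.coe_eq_coe.1 hl))

lemma _root_.Set.finite_and_ncard_le_of_witness {β γ : Type*} {s : Set β} (t : Finset γ)
    (r : β → γ → Prop) (hex : ∀ a ∈ s, ∃ b ∈ t, r a b)
    (huniq : ∀ a a' b, r a b → r a' b → a = a') : s.Finite ∧ s.ncard ≤ t.card := by
  rcases s.eq_empty_or_nonempty with rfl | ⟨a₀, ha₀⟩
  · simp
  have : Nonempty γ := ⟨(hex a₀ ha₀).choose⟩
  choose! f hft hr using hex
  have hinj : Set.InjOn f s := fun a ha a' ha' he => huniq a a' (f a) (hr a ha) (he ▸ hr a' ha')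
  exact ⟨Set.Finite.of_injOn (fun a ha => Finset.mem_coe.2 (hft a ha)) hinj t.finite_toSet,
    (Set.ncard_le_ncard_of_injOn f hft hinj t.finite_toSet).trans (Set.ncard_coe_finset t).le⟩

section Letters

variable {n : ℕ}

@[simp]
lemma Letter.bar_bar (x : Letter n) : Letter.bar (Letter.bar x) = x := by
  simp [Letter.bar]

@[simp]
lemma Word.bar_bar (W : Word n) : Word.bar (Word.bar W) = W := by
  simp [Word.bar, Function.comp_def]

lemma Word.head?_bar (W : Word n) : (Word.bar W).head? = W.getLast?.map Letter.bar := by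
  simp [Word.bar]

lemma Word.bar_wpow (W : Word n) (k : ℕ) : Word.bar (wpow W k) = wpow (Word.bar W) k := by
  simp [Word.bar, wpow, map_flatten, reverse_flatten]

lemma Word.bar_cons_append (p q : Letter n) (Y : Word n) :
    Word.bar (p :: Word.bar Y ++ [q]) = Letter.bar q :: Y ++ [Letter.bar p] := by
  simp [Word.bar, Function.comp_def]

lemma _root_.List.IsRotated.bar {R W : Word n} (h : R ~r W) : Word.bar R ~r Word.bar W :=
  (h.map _).reverse

lemma _root_.List.IsInfix.bar {P W : Word n} (h : P <:+: W) : Word.bar P <:+: Word.bar W :=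
  (h.map _).reverse

lemma head?_ne_map_bar_getLast? {R : Word n} (h : CReduced (cyc R)) :
    R.head? ≠ R.getLast?.map Letter.bar := by
  obtain ⟨R₀, b, rfl⟩ : ∃ R₀ b, R = R₀ ++ [b] := by
    simpa using (eq_nil_or_concat R).resolve_left fun h' => h.1 (by simp [h', cyc])
  have hred : FreelyReduced (b :: R₀) :=
    h.2 _ (Cycle.coe_eq_coe.2 (isRotated_append (l := [b]) (l' := R₀)))
  rw [show (R₀ ++ [b]).getLast? = some b by simp]
  cases R₀ with
  | nil => simp [Letter.bar, Prod.ext_iff]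
  | cons a R₁ => simpa using (isChain_cons_cons.1 hred).1

end Letters

section LinkedPairs

variable {n : ℕ}

lemma nodup_of_o_ne_zero {𝒪 : CWord n} (h𝒪 : SurfaceSymbol 𝒪) {L : Word n}
    (h : o 𝒪 (cyc L) ≠ 0) : L.Nodup := by
  obtain ⟨-, O, hO, hOnd, -⟩ := h𝒪
  have key : ∀ X O' : Word n, cyc X = cyc L → cyc O' = 𝒪 → X <+ O' ∨ X <+ O'.reverse →
      L.Nodup := by
    intro X O' hX hO' hsub
    have hO'nd : O'.Nodup := (Cycle.coe_eq_coe.1 (hO'.trans hO.symm)).perm.nodup_iff.2 hOnd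
    have hXnd : X.Nodup := hsub.elim (·.nodup hO'nd) (·.nodup (nodup_reverse.2 hO'nd))
    exact (Cycle.coe_eq_coe.1 hX).perm.nodup_iff.1 hXnd
  unfold o at h
  split_ifs at h with hpos hneg
  · obtain ⟨-, X, O', hX, hO', hs⟩ := hpos
    exact key X O' hX hO' (Or.inl hs)
  · obtain ⟨-, X, O', hX, hO', hs⟩ := hneg
    exact key X O' hX hO' (Or.inr hs)
  · exact absurd rfl h

/-- In the second case (type (3)) `R'` is cut just after the first letter of `Q`, i.e. its
inverse is cut before the last letter of `Q̄`. -/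
def IsCutPair (R R' P Q : Word n) : Prop :=
  (Anchored R R' P Q ∧ R'.head? ≠ R.getLast?.map Letter.bar) ∨
    (Anchored R (Word.bar R') P (Word.bar Q) ∧ R'.head? = R.getLast?.map Letter.bar)

namespace IsCutPair

variable {R R' P Q P' Q' : Word n}

lemma unique (h : IsCutPair R R' P Q) (h' : IsCutPair R R' P' Q') : P = P' ∧ Q = Q' := by
  rcases h with ⟨h, hf⟩ | ⟨h, hf⟩ <;> rcases h' with ⟨h', hf'⟩ | ⟨h', hf'⟩
  · exact h.unique h'
  · exact absurd hf' hf
  · exact absurd hf hf'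
  · obtain ⟨hP, hQ⟩ := h.unique h'
    exact ⟨hP, by simpa using congrArg Word.bar hQ⟩

lemma not_self (hR : CReduced (cyc R)) : ¬ IsCutPair R R P Q := by
  rintro (⟨h, -⟩ | ⟨-, hf⟩)
  · exact h.not_self
  · exact head?_ne_map_bar_getLast? hR hf

end IsCutPair

lemma exists_isCutPair {𝒪 𝒱 𝒲 : CWord n} (h𝒪 : SurfaceSymbol 𝒪) (hW : CReduced 𝒲)
    {P Q : Word n} {j k : ℕ} (hL : IsLinked 𝒪 P Q) (hP : SubwordPow P 𝒱 j)
    (hQ : SubwordPow Q 𝒲 k) : ∃ R R', cyc R = 𝒱 ∧ cyc R' = 𝒲 ∧ IsCutPair R R' P Q := by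
  obtain ⟨V, rfl, hPV⟩ := hP
  obtain ⟨W, rfl, hQW⟩ := hQ
  suffices ∃ R R', R ~r V ∧ R' ~r W ∧ IsCutPair R R' P Q by
    obtain ⟨R, R', hR, hR', h⟩ := this
    exact ⟨R, R', Cycle.coe_eq_coe.2 hR, Cycle.coe_eq_coe.2 hR', h⟩
  obtain ⟨-, -, -, -, ⟨p₁, p₂, q₁, q₂, rfl, rfl, ho⟩ |
    ⟨p₁, p₂, q₁, q₂, Y, hY, rfl, rfl, hpq, -, -⟩ | ⟨p₁, p₂, q₁, q₂, Y, hY, rfl, rfl, hpq, -, -⟩⟩ :=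
    hL
  · have hnd := nodup_of_o_ne_zero h𝒪 ho
    have hpq : p₁ ≠ q₁ := fun h => by simp [h] at hnd
    have hq₂ : q₂ ≠ Letter.bar p₁ := fun h => by simp [h] at hnd
    obtain ⟨R, R', hR, hR', hA, hlast, -⟩ := exists_anchored (Y := []) hpq hPV hQW
    refine ⟨R, R', hR, hR', Or.inl ⟨hA, ?_⟩⟩
    rw [hA.head?_right, hlast]
    simpa using hq₂
  · obtain ⟨R, R', hR, hR', hA, hlast, hlast'⟩ := exists_anchored hpq hPV hQW
    refine ⟨R, R', hR, hR', Or.inl ⟨hA, ?_⟩⟩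
    rw [hlast, getLast?_cons_of_ne_nil hY, ← getLast?_cons_of_ne_nil (x := q₁) hY, ← hlast']
    exact head?_ne_map_bar_getLast? (by rwa [show cyc R' = cyc W from Cycle.coe_eq_coe.2 hR'])
  · have hQ' := hQW.bar
    rw [Word.bar_wpow, Word.bar_cons_append] at hQ'
    obtain ⟨R, S, hR, hS, hA, hlast, hlast'⟩ := exists_anchored hpq hPV hQ'
    refine ⟨R, Word.bar S, hR, by simpa using hS.bar,
      Or.inr ⟨by rwa [Word.bar_bar, Word.bar_cons_append], ?_⟩⟩
    rw [Word.head?_bar, hlast', hlast, getLast?_cons_of_ne_nil hY, getLast?_cons_of_ne_nil hY]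

lemma Subword.subwordPow_one {P : Word n} {𝒲 : CWord n} (h : Subword P 𝒲) :
    SubwordPow P 𝒲 1 := by
  obtain ⟨W, hW, hPW⟩ := h
  exact ⟨W, hW, by simpa [wpow] using hPW⟩

end LinkedPairs

/-- `𝕃ℙ₂(𝒱,𝒲)` has at most `l(𝒱)·l(𝒲)` elements and `𝕃ℙ₁(𝒲)`
has at most `l(𝒲)·(l(𝒲)-1)` elements. -/
theorem lp_finite_card_bounds (n : ℕ) (𝒪 : CWord n) (h𝒪 : SurfaceSymbol 𝒪)
    (𝒱 𝒲 : CWord n) (hV : CReduced 𝒱) (hW : CReduced 𝒲) :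
    ({PQ : Word n × Word n | LP2 𝒪 𝒱 𝒲 PQ.1 PQ.2}.Finite ∧
      {PQ : Word n × Word n | LP2 𝒪 𝒱 𝒲 PQ.1 PQ.2}.ncard ≤ clen 𝒱 * clen 𝒲) ∧
    ({PQ : Word n × Word n | LP1 𝒪 𝒲 PQ.1 PQ.2}.Finite ∧
      {PQ : Word n × Word n | LP1 𝒪 𝒲 PQ.1 PQ.2}.ncard ≤
        clen 𝒲 * (clen 𝒲 - 1)) := by
  obtain ⟨TV, hTV, memV⟩ := Cycle.exists_finset_card_le_length hV.1
  obtain ⟨TW, hTW, memW⟩ := Cycle.exists_finset_card_le_length hW.1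
  have huniq (PQ PQ' RR : Word n × Word n) (h : IsCutPair RR.1 RR.2 PQ.1 PQ.2)
      (h' : IsCutPair RR.1 RR.2 PQ'.1 PQ'.2) : PQ = PQ' :=
    Prod.ext_iff.2 (h.unique h')
  refine ⟨?_, ?_⟩
  · refine (Set.finite_and_ncard_le_of_witness (TV ×ˢ TW) _ ?_ huniq).imp_right (·.trans ?_)
    · rintro ⟨P, Q⟩ ⟨hL, j, k, -, -, hP, hQ, -⟩
      obtain ⟨R, R', hR, hR', hcut⟩ := exists_isCutPair h𝒪 hW hL hP hQ
      exact ⟨(R, R'), Finset.mem_product.2 ⟨memV R hR, memW R' hR'⟩, hcut⟩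
    · rw [Finset.card_product]
      exact Nat.mul_le_mul hTV hTW
  · refine (Set.finite_and_ncard_le_of_witness TW.offDiag _ ?_ huniq).imp_right (·.trans ?_)
    · rintro ⟨P, Q⟩ ⟨hL, hP, hQ⟩
      obtain ⟨R, R', hR, hR', hcut⟩ :=
        exists_isCutPair h𝒪 hW hL hP.subwordPow_one hQ.subwordPow_one
      refine ⟨(R, R'), Finset.mem_offDiag.2 ⟨memW R hR, memW R' hR', fun hRR' : R = R' => ?_⟩, hcut⟩
      subst hR hRR'
      exact hcut.not_self hW
    · rw [Finset.offDiag_card, ← Nat.mul_sub_one]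
      exact Nat.mul_le_mul hTW (Nat.sub_le_sub_right hTW 1)

end CyclicWords
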